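/- Let G = (A ∪ B, E) be a finite bipartite graph and let P be the polytope of vectors x = (x_e)_{e∈E} satisfying x_e ≥ 0 for all e ∈ E, 1 ≤ Σ_{e ∈ δ(a)} x_e ≤ 4 for all a ∈ A, and Σ_{e ∈ δ(b)} x_e = 1 for all b ∈ B. Then every extreme point x* of P is integral, i.e., x*_e ∈ {0, 1} for all e ∈ E. -/

import Mathlib

attribute [local instance] Classical.propDecidable

lemma sum01 {ι : Type*} (s : Finset ι) (f : ι → ℝ) (h : ∀ i ∈ s, f i = 0 ∨ f i = 1) :
    ∃ n : ℕ, ∑ i ∈ s, f i = n := by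
  classical
  induction s using Finset.induction with
  | empty => exact ⟨0, by simp⟩
  | @insert a s ha ih =>
    obtain ⟨n, hn⟩ := ih (fun i hi => h i (Finset.mem_insert_of_mem hi))
    rcases h a (Finset.mem_insert_self a s) with h0 | h1
    · exact ⟨n, by rw [Finset.sum_insert ha, h0, hn, zero_add]⟩
    · exact ⟨n + 1, by rw [Finset.sum_insert ha, h1, hn]; push_cast; ring⟩

/-- If a 0-1-bounded vector sums (over the indices satisfying `Q`) to a natural number,
then the set of fractional indices satisfying `Q`, if nonempty, has at least 2 elements. -/
lemma frac_two {ι : Type*} [Fintype ι] (x : ι → ℝ) (Q : ι → Prop)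
    (c : ℕ) (hsum : (∑ i : ι, if Q i then x i else 0) = c)
    (F : Finset ι) (hF : ∀ i, i ∈ F ↔ (x i ≠ 0 ∧ x i ≠ 1))
    (hrange : ∀ i, 0 ≤ x i ∧ x i ≤ 1)
    (f : ι) (hfF : f ∈ F) (hfQ : Q f) :
    2 ≤ (F.filter Q).card := by
  classical
  by_contra h
  push_neg at h
  have hmem : f ∈ F.filter Q := Finset.mem_filter.mpr ⟨hfF, hfQ⟩
  have hcard : (F.filter Q).card = 1 := by
    have : 1 ≤ (F.filter Q).card := Finset.card_pos.mpr ⟨f, hmem⟩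
    omega
  obtain ⟨g, hg⟩ := Finset.card_eq_one.mp hcard
  have hgf : g = f := by
    have := hmem; rw [hg, Finset.mem_singleton] at this; exact this.symm
  subst hgf
  -- rewrite the sum over the Q-indices
  have h1 : (∑ i : ι, if Q i then x i else 0) = ∑ i ∈ Finset.univ.filter Q, x i := by
    rw [Finset.sum_filter]
  have hsplit : ∑ i ∈ Finset.univ.filter Q, x i
      = (∑ i ∈ (Finset.univ.filter Q).filter (· ∈ F), x i)
        + ∑ i ∈ (Finset.univ.filter Q).filter (¬ · ∈ F), x i :=
    (Finset.sum_filter_add_sum_filter_not _ _ _).symm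
  have hfirst : (Finset.univ.filter Q).filter (· ∈ F) = {g} := by
    rw [← hg]
    ext i
    simp only [Finset.mem_filter, Finset.mem_univ, true_and]
    tauto
  obtain ⟨n, hn⟩ := sum01 ((Finset.univ.filter Q).filter (¬ · ∈ F)) x (by
    intro i hi
    simp only [Finset.mem_filter] at hi
    have := hF i
    by_contra hcon
    push_neg at hcon
    exact hi.2 ((hF i).mpr hcon))
  have hval : (c : ℝ) = x g + n := by
    rw [← hsum, h1, hsplit, hfirst, Finset.sum_singleton, hn]
  have hg0 : 0 < x g := lt_of_le_of_ne (hrange g).1 (Ne.symm ((hF g).mp hfF).1)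
  have hg1 : x g < 1 := lt_of_le_of_ne (hrange g).2 ((hF g).mp hfF).2
  rcases le_or_gt c n with hcn | hcn
  · have : (c : ℝ) ≤ n := by exact_mod_cast hcn
    linarith
  · have : (n : ℝ) + 1 ≤ c := by exact_mod_cast hcn
    linarith

open Filter Topology in
lemma key_perturb {A B : Type*} [Fintype A] [Fintype B] (E : Finset (A × B))
    (x d : ↥E → ℝ)
    (hx : x ∈ Set.extremePoints ℝ
      {y : ↥E → ℝ |
        (∀ e : ↥E, 0 ≤ y e) ∧
        (∀ a : A, 1 ≤ ∑ e : ↥E, if (e : A × B).1 = a then y e else 0) ∧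
        (∀ a : A, (∑ e : ↥E, if (e : A × B).1 = a then y e else 0) ≤ 4) ∧
        (∀ b : B, (∑ e : ↥E, if (e : A × B).2 = b then y e else 0) = 1)})
    (hd : ∀ e : ↥E, d e ≠ 0 → 0 < x e ∧ x e < 1)
    (hb : ∀ b : B, (∑ e : ↥E, if (e : A × B).2 = b then d e else 0) = 0)
    (ha : ∀ a : A,
      ((∑ e : ↥E, if (e : A × B).1 = a then x e else 0) = 1 ∨
       (∑ e : ↥E, if (e : A × B).1 = a then x e else 0) = 4) →
      (∑ e : ↥E, if (e : A × B).1 = a then d e else 0) = 0) :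
    d = 0 := by
  classical
  obtain ⟨hxP, hxe⟩ := hx
  obtain ⟨hpos, hlo, hhi, heq⟩ := hxP
  -- sums with perturbation
  have hsum : ∀ (ε : ℝ) (f : A × B → Prop) (z : ↥E → ℝ),
      (∑ e : ↥E, if f (e : A × B) then (z + ε • d) e else 0)
        = (∑ e : ↥E, if f (e : A × B) then z e else 0)
          + ε * (∑ e : ↥E, if f (e : A × B) then d e else 0) := by
    intro ε f z
    rw [Finset.mul_sum, ← Finset.sum_add_distrib]
    refine Finset.sum_congr rfl fun e _ => ?_
    by_cases h : f (e : A × B) <;> simp [h]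
  have hmem : ∀ ε : ℝ, (∀ e : ↥E, 0 ≤ x e + ε * d e ∧ 0 ≤ x e + (-ε) * d e) →
      (∀ a : A,
        (1 ≤ (∑ e : ↥E, if (e : A × B).1 = a then x e else 0)
              + ε * (∑ e : ↥E, if (e : A × B).1 = a then d e else 0) ∧
         (∑ e : ↥E, if (e : A × B).1 = a then x e else 0)
              + ε * (∑ e : ↥E, if (e : A × B).1 = a then d e else 0) ≤ 4) ∧
        (1 ≤ (∑ e : ↥E, if (e : A × B).1 = a then x e else 0)
              + (-ε) * (∑ e : ↥E, if (e : A × B).1 = a then d e else 0) ∧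
         (∑ e : ↥E, if (e : A × B).1 = a then x e else 0)
              + (-ε) * (∑ e : ↥E, if (e : A × B).1 = a then d e else 0) ≤ 4)) →
      ∀ s : ℝ, s = ε ∨ s = -ε →
      (x + s • d) ∈
      {y : ↥E → ℝ |
        (∀ e : ↥E, 0 ≤ y e) ∧
        (∀ a : A, 1 ≤ ∑ e : ↥E, if (e : A × B).1 = a then y e else 0) ∧
        (∀ a : A, (∑ e : ↥E, if (e : A × B).1 = a then y e else 0) ≤ 4) ∧
        (∀ b : B, (∑ e : ↥E, if (e : A × B).2 = b then y e else 0) = 1)} := by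
    intro ε h1 h2 s hs
    refine ⟨?_, ?_, ?_, ?_⟩
    · intro e
      rcases hs with rfl | rfl
      · simpa using (h1 e).1
      · simpa using (h1 e).2
    · intro a
      rw [hsum s (fun p => p.1 = a) x]
      rcases hs with rfl | rfl
      · exact ((h2 a).1).1
      · exact ((h2 a).2).1
    · intro a
      rw [hsum s (fun p => p.1 = a) x]
      rcases hs with rfl | rfl
      · exact ((h2 a).1).2
      · exact ((h2 a).2).2
    · intro b
      rw [hsum s (fun p => p.2 = b) x, hb b, mul_zero, add_zero]
      exact heq b
  -- eventually in 𝓝[>] 0 all the strict conditions hold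
  have hev1 : ∀ᶠ ε : ℝ in 𝓝[>] (0:ℝ),
      ∀ e : ↥E, 0 ≤ x e + ε * d e ∧ 0 ≤ x e + (-ε) * d e := by
    rw [eventually_all]
    intro e
    by_cases hde : d e = 0
    · exact Eventually.of_forall fun ε => by simp [hde]; exact hpos e
    · obtain ⟨h0, _⟩ := hd e hde
      have t1 : Tendsto (fun ε : ℝ => x e + ε * d e) (𝓝[>] 0) (𝓝 (x e)) := by
        have : Tendsto (fun ε : ℝ => x e + ε * d e) (𝓝 0) (𝓝 (x e + 0 * d e)) :=
          (tendsto_const_nhds.add (tendsto_id.mul tendsto_const_nhds))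
        simpa using this.mono_left nhdsWithin_le_nhds
      have t2 : Tendsto (fun ε : ℝ => x e + (-ε) * d e) (𝓝[>] 0) (𝓝 (x e)) := by
        have : Tendsto (fun ε : ℝ => x e + (-ε) * d e) (𝓝 0) (𝓝 (x e + (-0) * d e)) :=
          (tendsto_const_nhds.add ((tendsto_id.neg).mul tendsto_const_nhds))
        simpa using this.mono_left nhdsWithin_le_nhds
      exact ((t1.eventually_const_le h0).and (t2.eventually_const_le h0))
  have hev2 : ∀ᶠ ε : ℝ in 𝓝[>] (0:ℝ),
      ∀ a : A,
        (1 ≤ (∑ e : ↥E, if (e : A × B).1 = a then x e else 0)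
              + ε * (∑ e : ↥E, if (e : A × B).1 = a then d e else 0) ∧
         (∑ e : ↥E, if (e : A × B).1 = a then x e else 0)
              + ε * (∑ e : ↥E, if (e : A × B).1 = a then d e else 0) ≤ 4) ∧
        (1 ≤ (∑ e : ↥E, if (e : A × B).1 = a then x e else 0)
              + (-ε) * (∑ e : ↥E, if (e : A × B).1 = a then d e else 0) ∧
         (∑ e : ↥E, if (e : A × B).1 = a then x e else 0)
              + (-ε) * (∑ e : ↥E, if (e : A × B).1 = a then d e else 0) ≤ 4) := by
    rw [eventually_all]
    intro a
    set S := (∑ e : ↥E, if (e : A × B).1 = a then x e else 0) with hS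
    set T := (∑ e : ↥E, if (e : A × B).1 = a then d e else 0) with hT
    by_cases hta : S = 1 ∨ S = 4
    · have hT0 : T = 0 := ha a hta
      refine Eventually.of_forall fun ε => ?_
      simp only [hT0, mul_zero, add_zero]
      exact ⟨⟨hlo a, hhi a⟩, hlo a, hhi a⟩
    · push_neg at hta
      have h1 : 1 < S := lt_of_le_of_ne (hlo a) (Ne.symm hta.1)
      have h4 : S < 4 := lt_of_le_of_ne (hhi a) hta.2
      have t1 : Tendsto (fun ε : ℝ => S + ε * T) (𝓝[>] 0) (𝓝 S) := by
        have : Tendsto (fun ε : ℝ => S + ε * T) (𝓝 0) (𝓝 (S + 0 * T)) :=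
          (tendsto_const_nhds.add (tendsto_id.mul tendsto_const_nhds))
        simpa using this.mono_left nhdsWithin_le_nhds
      have t2 : Tendsto (fun ε : ℝ => S + (-ε) * T) (𝓝[>] 0) (𝓝 S) := by
        have : Tendsto (fun ε : ℝ => S + (-ε) * T) (𝓝 0) (𝓝 (S + (-0) * T)) :=
          (tendsto_const_nhds.add ((tendsto_id.neg).mul tendsto_const_nhds))
        simpa using this.mono_left nhdsWithin_le_nhds
      filter_upwards [t1.eventually_const_le h1, t1.eventually_le_const h4,
        t2.eventually_const_le h1, t2.eventually_le_const h4] with ε e1 e2 e3 e4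
      exact ⟨⟨e1, e2⟩, e3, e4⟩
  obtain ⟨ε, hε1, hε2, hεpos⟩ := (hev1.and (hev2.and self_mem_nhdsWithin)).exists
  have hεpos : (0:ℝ) < ε := hεpos
  have hy := hmem ε hε1 hε2 ε (Or.inl rfl)
  have hz := hmem ε hε1 hε2 (-ε) (Or.inr rfl)
  have hseg : x ∈ openSegment ℝ (x + ε • d) (x + (-ε) • d) := by
    refine ⟨1/2, 1/2, by norm_num, by norm_num, by norm_num, ?_⟩
    funext e
    simp only [Pi.add_apply, Pi.smul_apply, smul_eq_mul]
    ring
  have := (hxe hy hz hseg)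
  funext e
  have h := congrFun this e
  simp only [Pi.add_apply, Pi.smul_apply, smul_eq_mul] at h
  have : ε * d e = 0 := by linarith
  rcases mul_eq_zero.mp this with h' | h'
  · exact absurd h' (ne_of_gt hεpos)
  · simpa using h'

/-- Abstract counting argument: if every fiber over `Bt` and `At` has at least 2
elements, every element of `F` maps into `Bt`, and the fiber-sum linear map is
injective, then `F` is empty. -/
lemma count_contra {ι α β : Type*} [Fintype ι] [Fintype α] [Fintype β]
    (F : Finset ι) (p : ι → β) (q : ι → α) (Bt : Finset β) (At : Finset α)
    (hpBt : ∀ e ∈ F, p e ∈ Bt)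
    (hBt2 : ∀ b ∈ Bt, 2 ≤ (F.filter (fun e => p e = b)).card)
    (hAt2 : ∀ a ∈ At, 2 ≤ (F.filter (fun e => q e = a)).card)
    (hinj : ∀ d : ↥F → ℝ,
      (∀ b : ↥Bt, (∑ e : ↥F, if p ↑e = ↑b then d e else 0) = 0) →
      (∀ a : ↥At, (∑ e : ↥F, if q ↑e = ↑a then d e else 0) = 0) → d = 0) :
    F = ∅ := by
  classical
  -- the linear map
  set Φ : (↥F → ℝ) →ₗ[ℝ] (↥Bt → ℝ) × (↥At → ℝ) :=
    { toFun := fun d =>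
        (fun b => ∑ e : ↥F, if p ↑e = ↑b then d e else 0,
         fun a => ∑ e : ↥F, if q ↑e = ↑a then d e else 0),
      map_add' := by
        intro d d'
        refine Prod.ext ?_ ?_ <;>
          · funext z
            simp only [Prod.fst_add, Prod.snd_add, Pi.add_apply]
            rw [← Finset.sum_add_distrib]
            refine Finset.sum_congr rfl fun e _ => ?_
            split <;> simp
      map_smul' := by
        intro c d
        refine Prod.ext ?_ ?_ <;>
          · funext z
            simp only [Prod.smul_fst, Prod.smul_snd, Pi.smul_apply, smul_eq_mul,
              RingHom.id_apply]
            rw [Finset.mul_sum]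
            refine Finset.sum_congr rfl fun e _ => ?_
            split <;> simp } with hΦ
  have hker : ∀ d : ↥F → ℝ, Φ d = 0 → d = 0 := by
    intro d hd
    have h1 : ∀ b : ↥Bt, (∑ e : ↥F, if p ↑e = ↑b then d e else 0) = 0 := fun b =>
      congrFun (congrArg Prod.fst hd) b
    have h2 : ∀ a : ↥At, (∑ e : ↥F, if q ↑e = ↑a then d e else 0) = 0 := fun a =>
      congrFun (congrArg Prod.snd hd) a
    exact hinj d h1 h2
  have hΦinj : Function.Injective Φ := by
    intro d1 d2 h
    have := hker (d1 - d2) (by rw [map_sub, h, sub_self])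
    funext e
    have := congrFun this e
    simp only [Pi.sub_apply, Pi.zero_apply, sub_eq_zero] at this
    exact this
  have hdim1 : Module.finrank ℝ (↥F → ℝ) = F.card := by
    rw [Module.finrank_pi]; exact Fintype.card_coe F
  have hdim2 : Module.finrank ℝ ((↥Bt → ℝ) × (↥At → ℝ)) = Bt.card + At.card := by
    rw [Module.finrank_prod, Module.finrank_pi, Module.finrank_pi, Fintype.card_coe,
      Fintype.card_coe]
  have hle : F.card ≤ Bt.card + At.card := by
    have := LinearMap.finrank_le_finrank_of_injective hΦinj
    rwa [hdim1, hdim2] at this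
  -- counting
  have hFB : F.card = ∑ b ∈ Bt, (F.filter (fun e => p e = b)).card :=
    Finset.card_eq_sum_card_fiberwise hpBt
  set Atouch : Finset α := Finset.univ.filter (fun a => (F.filter (fun e => q e = a)).Nonempty)
    with hAtouch
  have hqtouch : ∀ e ∈ F, q e ∈ Atouch := by
    intro e he
    simp only [hAtouch, Finset.mem_filter, Finset.mem_univ, true_and]
    exact ⟨e, Finset.mem_filter.mpr ⟨he, rfl⟩⟩
  have hFA : F.card = ∑ a ∈ Atouch, (F.filter (fun e => q e = a)).card :=
    Finset.card_eq_sum_card_fiberwise hqtouch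
  have hB2 : 2 * Bt.card ≤ F.card := by
    rw [hFB]
    calc 2 * Bt.card = ∑ _b ∈ Bt, 2 := by rw [Finset.sum_const, smul_eq_mul, mul_comm]
    _ ≤ _ := Finset.sum_le_sum hBt2
  have hAsub : At ⊆ Atouch := by
    intro a ha
    simp only [hAtouch, Finset.mem_filter, Finset.mem_univ, true_and]
    exact Finset.card_pos.mp (lt_of_lt_of_le (by norm_num) (hAt2 a ha))
  have hA2 : 2 * At.card ≤ ∑ a ∈ At, (F.filter (fun e => q e = a)).card := by
    calc 2 * At.card = ∑ _a ∈ At, 2 := by rw [Finset.sum_const, smul_eq_mul, mul_comm]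
    _ ≤ _ := Finset.sum_le_sum hAt2
  have hA2' : ∑ a ∈ At, (F.filter (fun e => q e = a)).card ≤ F.card := by
    rw [hFA]
    exact Finset.sum_le_sum_of_subset hAsub
  -- equality cases
  have hcard : F.card = Bt.card + At.card := by omega
  -- every touched a is in At
  have htouchAt : Atouch ⊆ At := by
    by_contra hcon
    obtain ⟨a0, ha0touch, ha0At⟩ := Finset.not_subset.mp hcon
    have hpos : 0 < (F.filter (fun e => q e = a0)).card := by
      simp only [hAtouch, Finset.mem_filter] at ha0touch
      exact Finset.card_pos.mpr ha0touch.2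
    have hlt : ∑ a ∈ At, (F.filter (fun e => q e = a)).card
        < ∑ a ∈ Atouch, (F.filter (fun e => q e = a)).card := by
      refine Finset.sum_lt_sum_of_subset hAsub ha0touch ha0At hpos ?_
      intro a _ _; exact Nat.zero_le _
    omega
  have hqAt : ∀ e ∈ F, q e ∈ At := fun e he => htouchAt (hqtouch e he)
  -- build the equivalence and hit the target vector
  have hdimeq : Module.finrank ℝ (↥F → ℝ) = Module.finrank ℝ ((↥Bt → ℝ) × (↥At → ℝ)) := by
    rw [hdim1, hdim2, hcard]
  let e := Φ.linearEquivOfInjective hΦinj hdimeq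
  set y : (↥Bt → ℝ) × (↥At → ℝ) := (fun _ => 1, fun _ => 0) with hy
  set d : ↥F → ℝ := e.symm y with hd
  have hΦd : Φ d = y := by
    have h1 : e d = Φ d := Φ.linearEquivOfInjective_apply hΦinj hdimeq d
    rw [← h1, hd, LinearEquiv.apply_symm_apply]
  have hb1 : ∀ b : ↥Bt, (∑ e : ↥F, if p ↑e = ↑b then d e else 0) = 1 := fun b =>
    congrFun (congrArg Prod.fst hΦd) b
  have ha0 : ∀ a : ↥At, (∑ e : ↥F, if q ↑e = ↑a then d e else 0) = 0 := fun a =>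
    congrFun (congrArg Prod.snd hΦd) a
  -- double counting
  have hsum1 : (Bt.card : ℝ) = ∑ e : ↥F, d e := by
    calc (Bt.card : ℝ) = ∑ _b : ↥Bt, (1:ℝ) := by
          simp [Finset.card_univ]
    _ = ∑ b : ↥Bt, ∑ e : ↥F, if p ↑e = ↑b then d e else 0 := by
          exact Finset.sum_congr rfl fun b _ => (hb1 b).symm
    _ = ∑ e : ↥F, ∑ b : ↥Bt, if p ↑e = ↑b then d e else 0 := Finset.sum_comm
    _ = ∑ e : ↥F, d e := by
          refine Finset.sum_congr rfl fun f _ => ?_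
          have hm : p (↑f : ι) ∈ Bt := hpBt _ f.2
          rw [Finset.sum_eq_single_of_mem (⟨p ↑f, hm⟩ : ↥Bt) (Finset.mem_univ _)]
          · simp
          · intro b _ hb
            rw [if_neg]
            intro hc
            exact hb (Subtype.ext hc.symm)
  have hsum0 : (0 : ℝ) = ∑ e : ↥F, d e := by
    calc (0 : ℝ) = ∑ _a : ↥At, (0:ℝ) := by simp
    _ = ∑ a : ↥At, ∑ e : ↥F, if q ↑e = ↑a then d e else 0 := by
          exact Finset.sum_congr rfl fun a _ => (ha0 a).symm
    _ = ∑ e : ↥F, ∑ a : ↥At, if q ↑e = ↑a then d e else 0 := Finset.sum_comm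
    _ = ∑ e : ↥F, d e := by
          refine Finset.sum_congr rfl fun f _ => ?_
          have hm : q (↑f : ι) ∈ At := hqAt _ f.2
          rw [Finset.sum_eq_single_of_mem (⟨q ↑f, hm⟩ : ↥At) (Finset.mem_univ _)]
          · simp
          · intro a _ hb
            rw [if_neg]
            intro hc
            exact hb (Subtype.ext hc.symm)
  have hBt0 : Bt.card = 0 := by
    have : (Bt.card : ℝ) = 0 := by rw [hsum1, ← hsum0]
    exact_mod_cast this
  have hBtempty : Bt = ∅ := Finset.card_eq_zero.mp hBt0
  refine Finset.eq_empty_iff_forall_notMem.mpr fun f hf => ?_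
  have := hpBt f hf
  rw [hBtempty] at this
  exact absurd this (Finset.notMem_empty _)

/-- Every extreme point of the polytope
`P = {x ∈ ℝ^E : x ≥ 0, 1 ≤ Σ_{e ∈ δ(a)} x_e ≤ 4 (a ∈ A), Σ_{e ∈ δ(b)} x_e = 1 (b ∈ B)}`
attached to a finite bipartite graph `G = (A ∪ B, E)` is integral, i.e. has all
coordinates in `{0, 1}`. -/
theorem stmt11 {A B : Type*} [Fintype A] [Fintype B] (E : Finset (A × B))
    (x : ↥E → ℝ)
    (hx : x ∈ Set.extremePoints ℝ
      {y : ↥E → ℝ |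
        (∀ e : ↥E, 0 ≤ y e) ∧
        (∀ a : A, 1 ≤ ∑ e : ↥E, if (e : A × B).1 = a then y e else 0) ∧
        (∀ a : A, (∑ e : ↥E, if (e : A × B).1 = a then y e else 0) ≤ 4) ∧
        (∀ b : B, (∑ e : ↥E, if (e : A × B).2 = b then y e else 0) = 1)}) :
    ∀ e : ↥E, x e = 0 ∨ x e = 1 := by
  classical
  by_contra hcon
  push_neg at hcon
  obtain ⟨e0, he00, he01⟩ := hcon
  obtain ⟨hpos, hlo, hhi, heq⟩ := hx.1
  -- every coordinate is at most 1
  have hle1 : ∀ e : ↥E, x e ≤ 1 := by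
    intro e
    have h := Finset.single_le_sum
      (f := fun e' : ↥E => if (e' : A × B).2 = (e : A × B).2 then x e' else 0)
      (fun i _ => by split
                     · exact hpos i
                     · exact le_refl 0) (Finset.mem_univ e)
    rw [heq (e : A × B).2] at h
    simpa using h
  have hrange : ∀ e : ↥E, 0 ≤ x e ∧ x e ≤ 1 := fun e => ⟨hpos e, hle1 e⟩
  -- fractional edges
  set F : Finset ↥E := Finset.univ.filter (fun e => x e ≠ 0 ∧ x e ≠ 1) with hFdef
  have hF : ∀ e : ↥E, e ∈ F ↔ (x e ≠ 0 ∧ x e ≠ 1) := by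
    intro e; simp [hFdef]
  have he0F : e0 ∈ F := (hF e0).mpr ⟨he00, he01⟩
  set p : ↥E → B := fun e => (e : A × B).2 with hp
  set q : ↥E → A := fun e => (e : A × B).1 with hq
  set Bt : Finset B :=
    Finset.univ.filter (fun b => (F.filter (fun e => p e = b)).Nonempty) with hBtdef
  set At : Finset A :=
    Finset.univ.filter (fun a =>
      ((∑ e : ↥E, if (e : A × B).1 = a then x e else 0) = 1 ∨
       (∑ e : ↥E, if (e : A × B).1 = a then x e else 0) = 4) ∧
      (F.filter (fun e => q e = a)).Nonempty) with hAtdef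
  have hpBt : ∀ e ∈ F, p e ∈ Bt := by
    intro e he
    simp only [hBtdef, Finset.mem_filter, Finset.mem_univ, true_and]
    exact ⟨e, Finset.mem_filter.mpr ⟨he, rfl⟩⟩
  have hBt2 : ∀ b ∈ Bt, 2 ≤ (F.filter (fun e => p e = b)).card := by
    intro b hb
    simp only [hBtdef, Finset.mem_filter, Finset.mem_univ, true_and] at hb
    obtain ⟨f, hf⟩ := hb
    have hfF := (Finset.mem_filter.mp hf).1
    have hfQ := (Finset.mem_filter.mp hf).2
    exact frac_two x (fun e => p e = b) 1
      (by rw [Nat.cast_one]; exact heq b) F hF hrange f hfF hfQ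
  have hAt2 : ∀ a ∈ At, 2 ≤ (F.filter (fun e => q e = a)).card := by
    intro a ha
    simp only [hAtdef, Finset.mem_filter, Finset.mem_univ, true_and] at ha
    obtain ⟨htight, f, hf⟩ := ha
    have hfF := (Finset.mem_filter.mp hf).1
    have hfQ := (Finset.mem_filter.mp hf).2
    rcases htight with h1 | h4
    · exact frac_two x (fun e => q e = a) 1
        (by rw [Nat.cast_one]; exact h1) F hF hrange f hfF hfQ
    · exact frac_two x (fun e => q e = a) 4
        (by rw [h4]; norm_num) F hF hrange f hfF hfQ
  have hinj : ∀ d : ↥F → ℝ,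
      (∀ b : ↥Bt, (∑ e : ↥F, if p ↑e = ↑b then d e else 0) = 0) →
      (∀ a : ↥At, (∑ e : ↥F, if q ↑e = ↑a then d e else 0) = 0) → d = 0 := by
    intro d hbz haz
    set d' : ↥E → ℝ := fun e => if h : e ∈ F then d ⟨e, h⟩ else 0 with hd'
    -- reduce a sum over all edges to a sum over fractional edges
    have hred : ∀ (G : A × B → Prop),
        (∑ e : ↥E, if G (e : A × B) then d' e else 0)
          = ∑ e : ↥F, if G ((e : ↥E) : A × B) then d e else 0 := by
      intro G
      have h1 : (∑ e ∈ F, if G (e : A × B) then d' e else 0)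
          = ∑ e : ↥E, if G (e : A × B) then d' e else 0 := by
        refine Finset.sum_subset (Finset.subset_univ F) ?_
        intro e _ he
        have : d' e = 0 := by rw [hd']; exact dif_neg he
        rw [this, ite_self]
      rw [← h1, ← Finset.sum_coe_sort F (fun e => if G (e : A × B) then d' e else 0)]
      refine Finset.sum_congr rfl fun e _ => ?_
      have : d' ↑e = d e := by
        rw [hd']; simp only [e.2, dif_pos]
      rw [this]
    have hd'0 : d' = 0 := by
      refine key_perturb E x d' hx ?_ ?_ ?_
      · intro e hne
        have heF : e ∈ F := by
          by_contra hc
          exact hne (by rw [hd']; exact dif_neg hc)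
        obtain ⟨h0, h1⟩ := (hF e).mp heF
        exact ⟨lt_of_le_of_ne (hpos e) (Ne.symm h0), lt_of_le_of_ne (hle1 e) h1⟩
      · intro b
        rw [hred (fun pr => pr.2 = b)]
        by_cases hb : b ∈ Bt
        · exact hbz ⟨b, hb⟩
        · refine Finset.sum_eq_zero fun e _ => ?_
          rw [if_neg]
          intro hc
          exact hb (hc ▸ hpBt ↑e e.2)
      · intro a hta
        rw [hred (fun pr => pr.1 = a)]
        by_cases ht : (F.filter (fun e => q e = a)).Nonempty
        · have haAt : a ∈ At := by
            simp only [hAtdef, Finset.mem_filter, Finset.mem_univ, true_and]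
            exact ⟨hta, ht⟩
          exact haz ⟨a, haAt⟩
        · refine Finset.sum_eq_zero fun e _ => ?_
          rw [if_neg]
          intro hc
          exact ht ⟨↑e, Finset.mem_filter.mpr ⟨e.2, hc⟩⟩
    funext e
    have h := congrFun hd'0 ↑e
    simp only [Pi.zero_apply, hd'] at h
    rw [dif_pos e.2] at h
    simpa using h
  have hFempty : F = ∅ := count_contra F p q Bt At hpBt hBt2 hAt2 hinj
  rw [hFempty] at he0F
  exact absurd he0F (Finset.notMem_empty _)
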